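/- For 0 ≤ α ≤ 1/2, the divergence IB^{R,α}(X,Y) with complexity (α√m + (1−α)√M)², where m = min(H(X),H(Y)) and M = max(H(X),H(Y)), satisfies IB^{R,α}(X,Y) ≥ (α² + (1−α)²)·D^{S,α}(X,Y), and consequently the relaxed triangle inequality IB^{R,α}(X,Y) ≤ (α²+(1−α)²)⁻¹·(IB^{R,α}(X,Z) + IB^{R,α}(Y,Z)). -/
import Mathlib

set_option linter.unusedSectionVars false

open Real

/-- Shannon entropy of a discrete random variable `X` on a finite probability
space with weights `p`. -/
noncomputable def ent {Ω S : Type*} [Fintype Ω] [Fintype S] [DecidableEq S]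
    (p : Ω → ℝ) (X : Ω → S) : ℝ :=
  ∑ s : S, Real.negMulLog (∑ ω ∈ Finset.univ.filter (fun ω => X ω = s), p ω)

/-- Conditional entropy `H(X|Y) = H(X,Y) - H(Y)`. -/
noncomputable def condEnt {Ω S T : Type*} [Fintype Ω] [Fintype S] [Fintype T]
    [DecidableEq S] [DecidableEq T] (p : Ω → ℝ) (X : Ω → S) (Y : Ω → T) : ℝ :=
  ent p (fun ω => (X ω, Y ω)) - ent p Y

/-- Mutual information `I(X;Y) = H(X) + H(Y) - H(X,Y)`. -/
noncomputable def mutualInfo {Ω S T : Type*} [Fintype Ω] [Fintype S] [Fintype T]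
    [DecidableEq S] [DecidableEq T] (p : Ω → ℝ) (X : Ω → S) (Y : Ω → T) : ℝ :=
  ent p X + ent p Y - ent p (fun ω => (X ω, Y ω))

/-- The divergence `IB^{R,α}` with square-root-mean complexity term. -/
noncomputable def IBR {Ω S T : Type*} [Fintype Ω] [Fintype S] [Fintype T]
    [DecidableEq S] [DecidableEq T] (α : ℝ) (p : Ω → ℝ) (X : Ω → S) (Y : Ω → T) : ℝ :=
  (α * Real.sqrt (min (ent p X) (ent p Y)) +
      (1 - α) * Real.sqrt (max (ent p X) (ent p Y))) ^ 2 - mutualInfo p X Y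

/-- The divergence `D^{S,α}`. -/
noncomputable def DS {Ω S T : Type*} [Fintype Ω] [Fintype S] [Fintype T]
    [DecidableEq S] [DecidableEq T] (α : ℝ) (p : Ω → ℝ) (X : Ω → S) (Y : Ω → T) : ℝ :=
  α * min (ent p X) (ent p Y) + (1 - α) * max (ent p X) (ent p Y) - mutualInfo p X Y

/-! ### Auxiliary analytic lemmas -/

lemma negMulLog_sum_le' {ι : Type*} (s : Finset ι) (f : ι → ℝ) (hf : ∀ i ∈ s, 0 ≤ f i) :
    Real.negMulLog (∑ i ∈ s, f i) ≤ ∑ i ∈ s, Real.negMulLog (f i) := by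
  have hS : ∀ i ∈ s, f i ≤ ∑ j ∈ s, f j := fun i hi => Finset.single_le_sum hf hi
  have h : ∑ i ∈ s, f i * Real.log (f i) ≤ ∑ i ∈ s, f i * Real.log (∑ j ∈ s, f j) := by
    refine Finset.sum_le_sum fun i hi => ?_
    rcases (hf i hi).eq_or_lt with h0 | h0
    · simp [← h0]
    · exact mul_le_mul_of_nonneg_left (Real.log_le_log h0 (hS i hi)) (hf i hi)
  have h2 : (∑ i ∈ s, f i) * Real.log (∑ j ∈ s, f j)
      = ∑ i ∈ s, f i * Real.log (∑ j ∈ s, f j) := Finset.sum_mul _ _ _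
  have l : Real.negMulLog (∑ i ∈ s, f i) = -(∑ i ∈ s, f i * Real.log (∑ j ∈ s, f j)) := by
    rw [Real.negMulLog, neg_mul, h2]
  have r : ∑ i ∈ s, Real.negMulLog (f i) = -(∑ i ∈ s, f i * Real.log (f i)) := by
    simp [Real.negMulLog, neg_mul, Finset.sum_neg_distrib]
  rw [l, r]
  exact neg_le_neg h

lemma gibbs' {x y : ℝ} (hx : 0 ≤ x) (hy : 0 ≤ y) (h : y = 0 → x = 0) :
    x - y ≤ x * Real.log x - x * Real.log y := by
  rcases hx.eq_or_lt with h0 | h0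
  · simp [← h0]; linarith
  · have hy0 : 0 < y := by
      rcases hy.eq_or_lt with e | e
      · exact absurd (h e.symm) (by linarith)
      · exact e
    have hlog : Real.log (y / x) ≤ y / x - 1 := Real.log_le_sub_one_of_pos (by positivity)
    rw [Real.log_div (ne_of_gt hy0) (ne_of_gt h0)] at hlog
    have := mul_le_mul_of_nonneg_left hlog h0.le
    have hxy : x * (y / x) = y := mul_div_cancel₀ y (ne_of_gt h0)
    nlinarith

/-! ### Entropy lemmas -/

section entlem
variable {Ω : Type*} [Fintype Ω] {S T U : Type*} [Fintype S] [Fintype T] [Fintype U]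
  [DecidableEq S] [DecidableEq T] [DecidableEq U] (p : Ω → ℝ)

lemma mass_nonneg (hp0 : ∀ ω, 0 ≤ p ω) (X : Ω → S) (s : S) :
    0 ≤ ∑ ω ∈ Finset.univ.filter (fun ω => X ω = s), p ω :=
  Finset.sum_nonneg fun ω _ => hp0 ω

lemma mass_le_one (hp0 : ∀ ω, 0 ≤ p ω) (hp1 : ∑ ω, p ω = 1) (X : Ω → S) (s : S) :
    ∑ ω ∈ Finset.univ.filter (fun ω => X ω = s), p ω ≤ 1 := by
  rw [← hp1]
  exact Finset.sum_le_sum_of_subset_of_nonneg (Finset.filter_subset _ _)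
    (fun ω _ _ => hp0 ω)

lemma ent_nonneg (hp0 : ∀ ω, 0 ≤ p ω) (hp1 : ∑ ω, p ω = 1) (X : Ω → S) :
    0 ≤ ent p X :=
  Finset.sum_nonneg fun s _ =>
    Real.negMulLog_nonneg (mass_nonneg p hp0 X s) (mass_le_one p hp0 hp1 X s)

lemma ent_equiv {V V' : Type*} [Fintype V] [Fintype V'] [DecidableEq V] [DecidableEq V']
    (e : V ≃ V') (W : Ω → V) : ent p (fun ω => e (W ω)) = ent p W := by
  unfold ent
  refine (Fintype.sum_equiv e _ _ fun v => ?_).symm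
  congr 1
  refine Finset.sum_congr ?_ (fun _ _ => rfl)
  ext ω
  simp [e.apply_eq_iff_eq]

lemma mass_split {V : Type*} [Fintype V] [DecidableEq V] (A : Ω → V) (P : Ω → Prop)
    [DecidablePred P] :
    ∑ ω ∈ Finset.univ.filter P, p ω
      = ∑ v, ∑ ω ∈ Finset.univ.filter (fun ω => P ω ∧ A ω = v), p ω := by
  rw [← Finset.sum_fiberwise (Finset.univ.filter P) A p]
  refine Finset.sum_congr rfl fun v _ => ?_
  congr 1
  ext ω
  simp

lemma ent_pair_ge_left (hp0 : ∀ ω, 0 ≤ p ω) (X : Ω → S) (Y : Ω → T) :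
    ent p X ≤ ent p (fun ω => (X ω, Y ω)) := by
  unfold ent
  rw [Fintype.sum_prod_type]
  refine Finset.sum_le_sum fun s _ => ?_
  have hmass : ∑ ω ∈ Finset.univ.filter (fun ω => X ω = s), p ω
      = ∑ t, ∑ ω ∈ Finset.univ.filter (fun ω => (X ω, Y ω) = (s, t)), p ω := by
    rw [mass_split p Y (fun ω => X ω = s)]
    refine Finset.sum_congr rfl fun t _ => ?_
    congr 1
    ext ω
    simp [Prod.ext_iff]
  rw [hmass]
  exact negMulLog_sum_le' _ _ fun t _ => Finset.sum_nonneg fun ω _ => hp0 ω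

lemma ent_pair_comm (X : Ω → S) (Y : Ω → T) :
    ent p (fun ω => (Y ω, X ω)) = ent p (fun ω => (X ω, Y ω)) :=
  ent_equiv p (Equiv.prodComm S T) (fun ω => (X ω, Y ω))

lemma ent_pair_ge_right (hp0 : ∀ ω, 0 ≤ p ω) (X : Ω → S) (Y : Ω → T) :
    ent p Y ≤ ent p (fun ω => (X ω, Y ω)) := by
  rw [← ent_pair_comm p X Y]
  exact ent_pair_ge_left p hp0 Y X

/-- Core submodularity computation for a nonnegative array. -/
lemma submod_core (a : S → T → U → ℝ) (ha0 : ∀ s t u, 0 ≤ a s t u) :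
    (∑ s, ∑ t, ∑ u, Real.negMulLog (a s t u)) +
        ∑ u, Real.negMulLog (∑ s, ∑ t, a s t u) ≤
      (∑ s, ∑ u, Real.negMulLog (∑ t, a s t u)) +
        ∑ t, ∑ u, Real.negMulLog (∑ s, a s t u) := by
  set axz : S → U → ℝ := fun s u => ∑ t, a s t u with haxz_def
  set ayz : T → U → ℝ := fun t u => ∑ s, a s t u with hayz_def
  set az : U → ℝ := fun u => ∑ s, axz s u with haz_def
  have haxz0 : ∀ s u, 0 ≤ axz s u := fun s u => Finset.sum_nonneg fun t _ => ha0 s t u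
  have hayz0 : ∀ t u, 0 ≤ ayz t u := fun t u => Finset.sum_nonneg fun s _ => ha0 s t u
  have haz0 : ∀ u, 0 ≤ az u := fun u => Finset.sum_nonneg fun s _ => haxz0 s u
  have haxz' : ∀ s u, axz s u = ∑ t, a s t u := fun s u => rfl
  have hayz' : ∀ t u, ayz t u = ∑ s, a s t u := fun t u => rfl
  have haz' : ∀ u, az u = ∑ s, axz s u := fun u => rfl
  have hazyz : ∀ u, az u = ∑ t, ayz t u := fun u => Finset.sum_comm
  have h_a_le_axz : ∀ s t u, a s t u ≤ axz s u := fun s t u =>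
    Finset.single_le_sum (fun t' _ => ha0 s t' u) (Finset.mem_univ t)
  have h_a_le_ayz : ∀ s t u, a s t u ≤ ayz t u := fun s t u =>
    Finset.single_le_sum (fun s' _ => ha0 s' t u) (Finset.mem_univ s)
  have h_axz_le_az : ∀ s u, axz s u ≤ az u := fun s u =>
    Finset.single_le_sum (fun s' _ => haxz0 s' u) (Finset.mem_univ s)
  set b : S → T → U → ℝ := fun s t u => axz s u * ayz t u / az u with hb_def
  have hb0 : ∀ s t u, 0 ≤ b s t u := fun s t u =>
    div_nonneg (mul_nonneg (haxz0 s u) (hayz0 t u)) (haz0 u)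
  have hbzero : ∀ s t u, b s t u = 0 → a s t u = 0 := by
    intro s t u hb
    rcases eq_or_ne (az u) 0 with h0 | h0
    · have : a s t u ≤ 0 := le_trans (h_a_le_axz s t u) (h0 ▸ h_axz_le_az s u)
      linarith [ha0 s t u]
    · rcases div_eq_zero_iff.1 hb with hnum | hden
      · rcases mul_eq_zero.1 hnum with h | h
        · linarith [ha0 s t u, h_a_le_axz s t u]
        · linarith [ha0 s t u, h_a_le_ayz s t u]
      · exact absurd hden h0
  -- pointwise Gibbs inequality
  have key : ∀ s t u, a s t u - b s t u ≤
      a s t u * Real.log (a s t u) - a s t u * Real.log (b s t u) :=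
    fun s t u => gibbs' (ha0 s t u) (hb0 s t u) (hbzero s t u)
  -- sum of b equals sum of a
  have hb_sum : ∀ u, ∑ s, ∑ t, b s t u = az u := by
    intro u
    rcases eq_or_ne (az u) 0 with h0 | h0
    · have hx : ∀ s, axz s u = 0 := fun s =>
        (Finset.sum_eq_zero_iff_of_nonneg (fun s' _ => haxz0 s' u)).1 (haz' u ▸ h0) s
          (Finset.mem_univ s)
      have : ∀ s t, b s t u = 0 := by
        intro s t; rw [hb_def]; simp [hx s]
      simp [this, h0]
    · have e0 : ∀ s, ∑ t, b s t u = axz s u * (∑ t, ayz t u) / az u := by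
        intro s
        rw [Finset.mul_sum, Finset.sum_div]
      calc ∑ s, ∑ t, b s t u = ∑ s, axz s u * (∑ t, ayz t u) / az u :=
            Finset.sum_congr rfl fun s _ => e0 s
        _ = (∑ s, axz s u) * (∑ t, ayz t u) / az u := by
            rw [← Finset.sum_div, ← Finset.sum_mul]
        _ = az u * az u / az u := by rw [← haz' u, ← hazyz u]
        _ = az u := by field_simp
  have hsum_a : ∑ s, ∑ t, ∑ u, a s t u = ∑ u, az u := by
    calc ∑ s, ∑ t, ∑ u, a s t u = ∑ s, ∑ u, ∑ t, a s t u :=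
          Finset.sum_congr rfl fun s _ => Finset.sum_comm
      _ = ∑ u, ∑ s, ∑ t, a s t u := Finset.sum_comm
      _ = ∑ u, az u := rfl
  have hsum_b : ∑ s, ∑ t, ∑ u, b s t u = ∑ u, az u := by
    calc ∑ s, ∑ t, ∑ u, b s t u = ∑ s, ∑ u, ∑ t, b s t u :=
          Finset.sum_congr rfl fun s _ => Finset.sum_comm
      _ = ∑ u, ∑ s, ∑ t, b s t u := Finset.sum_comm
      _ = ∑ u, az u := Finset.sum_congr rfl fun u _ => hb_sum u
  -- expansion of log b
  have hlog : ∀ s t u, a s t u * Real.log (b s t u)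
      = a s t u * Real.log (axz s u) + a s t u * Real.log (ayz t u)
        - a s t u * Real.log (az u) := by
    intro s t u
    rcases (ha0 s t u).eq_or_lt with h0 | h0
    · simp [← h0]
    · have h1 : 0 < axz s u := lt_of_lt_of_le h0 (h_a_le_axz s t u)
      have h2 : 0 < ayz t u := lt_of_lt_of_le h0 (h_a_le_ayz s t u)
      have h3 : 0 < az u := lt_of_lt_of_le h1 (h_axz_le_az s u)
      have : b s t u = axz s u * ayz t u / az u := rfl
      rw [this, Real.log_div (by positivity) (ne_of_gt h3),
        Real.log_mul (ne_of_gt h1) (ne_of_gt h2)]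
      ring
  -- grouped log sums
  have G1 : ∑ s, ∑ t, ∑ u, a s t u * Real.log (axz s u)
      = ∑ s, ∑ u, axz s u * Real.log (axz s u) := by
    refine Finset.sum_congr rfl fun s _ => ?_
    rw [Finset.sum_comm]
    refine Finset.sum_congr rfl fun u _ => ?_
    rw [← Finset.sum_mul]
  have G2 : ∑ s, ∑ t, ∑ u, a s t u * Real.log (ayz t u)
      = ∑ t, ∑ u, ayz t u * Real.log (ayz t u) := by
    rw [Finset.sum_comm]
    refine Finset.sum_congr rfl fun t _ => ?_
    rw [Finset.sum_comm]
    refine Finset.sum_congr rfl fun u _ => ?_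
    rw [← Finset.sum_mul]
  have G3 : ∑ s, ∑ t, ∑ u, a s t u * Real.log (az u)
      = ∑ u, az u * Real.log (az u) := by
    calc ∑ s, ∑ t, ∑ u, a s t u * Real.log (az u)
        = ∑ s, ∑ u, (∑ t, a s t u) * Real.log (az u) := by
          refine Finset.sum_congr rfl fun s _ => ?_
          rw [Finset.sum_comm]
          exact Finset.sum_congr rfl fun u _ => (Finset.sum_mul _ _ _).symm
      _ = ∑ u, ∑ s, axz s u * Real.log (az u) := Finset.sum_comm
      _ = ∑ u, (∑ s, axz s u) * Real.log (az u) :=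
          Finset.sum_congr rfl fun u _ => (Finset.sum_mul _ _ _).symm
      _ = ∑ u, az u * Real.log (az u) := rfl
  -- main inequality
  have main : ∑ s, ∑ t, ∑ u, (a s t u - b s t u) ≤
      ∑ s, ∑ t, ∑ u, (a s t u * Real.log (a s t u) - a s t u * Real.log (b s t u)) := by
    refine Finset.sum_le_sum fun s _ => Finset.sum_le_sum fun t _ =>
      Finset.sum_le_sum fun u _ => key s t u
  have hL : ∑ s, ∑ t, ∑ u, (a s t u - b s t u) = 0 := by
    simp only [Finset.sum_sub_distrib]
    rw [hsum_a, hsum_b]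
    ring
  have hR : ∑ s, ∑ t, ∑ u, (a s t u * Real.log (a s t u) - a s t u * Real.log (b s t u))
      = (∑ s, ∑ t, ∑ u, a s t u * Real.log (a s t u))
        - ((∑ s, ∑ u, axz s u * Real.log (axz s u))
          + (∑ t, ∑ u, ayz t u * Real.log (ayz t u))
          - ∑ u, az u * Real.log (az u)) := by
    have e : ∀ s t u, a s t u * Real.log (a s t u) - a s t u * Real.log (b s t u)
        = a s t u * Real.log (a s t u) - (a s t u * Real.log (axz s u)
          + a s t u * Real.log (ayz t u) - a s t u * Real.log (az u)) := by
      intro s t u; rw [hlog s t u]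
    calc ∑ s, ∑ t, ∑ u, (a s t u * Real.log (a s t u) - a s t u * Real.log (b s t u))
        = ∑ s, ∑ t, ∑ u, (a s t u * Real.log (a s t u) - (a s t u * Real.log (axz s u)
          + a s t u * Real.log (ayz t u) - a s t u * Real.log (az u))) := by
          exact Finset.sum_congr rfl fun s _ => Finset.sum_congr rfl fun t _ =>
            Finset.sum_congr rfl fun u _ => e s t u
      _ = (∑ s, ∑ t, ∑ u, a s t u * Real.log (a s t u))
          - ((∑ s, ∑ t, ∑ u, a s t u * Real.log (axz s u))
            + (∑ s, ∑ t, ∑ u, a s t u * Real.log (ayz t u))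
            - ∑ s, ∑ t, ∑ u, a s t u * Real.log (az u)) := by
          simp only [Finset.sum_sub_distrib, Finset.sum_add_distrib]
      _ = _ := by rw [G1, G2, G3]
  -- translate goal into log-sum form
  show (∑ s, ∑ t, ∑ u, Real.negMulLog (a s t u)) + ∑ u, Real.negMulLog (az u) ≤
      (∑ s, ∑ u, Real.negMulLog (axz s u)) + ∑ t, ∑ u, Real.negMulLog (ayz t u)
  have c1 : ∑ s, ∑ t, ∑ u, Real.negMulLog (a s t u)
      = -(∑ s, ∑ t, ∑ u, a s t u * Real.log (a s t u)) := by
    simp [Real.negMulLog, neg_mul, Finset.sum_neg_distrib]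
  have c2 : ∑ u, Real.negMulLog (az u) = -(∑ u, az u * Real.log (az u)) := by
    simp [Real.negMulLog, neg_mul, Finset.sum_neg_distrib]
  have c3 : ∑ s, ∑ u, Real.negMulLog (axz s u)
      = -(∑ s, ∑ u, axz s u * Real.log (axz s u)) := by
    simp [Real.negMulLog, neg_mul, Finset.sum_neg_distrib]
  have c4 : ∑ t, ∑ u, Real.negMulLog (ayz t u)
      = -(∑ t, ∑ u, ayz t u * Real.log (ayz t u)) := by
    simp [Real.negMulLog, neg_mul, Finset.sum_neg_distrib]
  rw [c1, c2, c3, c4]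
  rw [hL, hR] at main
  linarith

lemma ent_triple_eq (X : Ω → S) (Y : Ω → T) (Z : Ω → U) :
    ent p (fun ω => (X ω, Y ω, Z ω)) = ∑ s, ∑ t, ∑ u,
      Real.negMulLog (∑ ω ∈ Finset.univ.filter (fun ω => (X ω, Y ω, Z ω) = (s, t, u)), p ω) := by
  unfold ent
  rw [Fintype.sum_prod_type]
  refine Finset.sum_congr rfl fun s _ => ?_
  rw [Fintype.sum_prod_type]

lemma ent_submod (hp0 : ∀ ω, 0 ≤ p ω) (X : Ω → S) (Y : Ω → T) (Z : Ω → U) :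
    ent p (fun ω => (X ω, Y ω)) + ent p Z ≤
      ent p (fun ω => (X ω, Z ω)) + ent p (fun ω => (Y ω, Z ω)) := by
  have core := submod_core
    (fun s t u => ∑ ω ∈ Finset.univ.filter (fun ω => (X ω, Y ω, Z ω) = (s, t, u)), p ω)
    (fun s t u => Finset.sum_nonneg fun ω _ => hp0 ω)
  have Exz : ent p (fun ω => (X ω, Z ω)) = ∑ s, ∑ u, Real.negMulLog
      (∑ t, ∑ ω ∈ Finset.univ.filter (fun ω => (X ω, Y ω, Z ω) = (s, t, u)), p ω) := by
    unfold ent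
    rw [Fintype.sum_prod_type]
    refine Finset.sum_congr rfl fun s _ => Finset.sum_congr rfl fun u _ => ?_
    congr 1
    rw [mass_split p Y (fun ω => (X ω, Z ω) = (s, u))]
    refine Finset.sum_congr rfl fun t _ => ?_
    congr 1
    ext ω
    simp only [Finset.mem_filter, Finset.mem_univ, true_and, Prod.mk.injEq]
    tauto
  have Eyz : ent p (fun ω => (Y ω, Z ω)) = ∑ t, ∑ u, Real.negMulLog
      (∑ s, ∑ ω ∈ Finset.univ.filter (fun ω => (X ω, Y ω, Z ω) = (s, t, u)), p ω) := by
    unfold ent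
    rw [Fintype.sum_prod_type]
    refine Finset.sum_congr rfl fun t _ => Finset.sum_congr rfl fun u _ => ?_
    congr 1
    rw [mass_split p X (fun ω => (Y ω, Z ω) = (t, u))]
    refine Finset.sum_congr rfl fun s _ => ?_
    congr 1
    ext ω
    simp only [Finset.mem_filter, Finset.mem_univ, true_and, Prod.mk.injEq]
    tauto
  have Ez : ent p Z = ∑ u, Real.negMulLog
      (∑ s, ∑ t, ∑ ω ∈ Finset.univ.filter (fun ω => (X ω, Y ω, Z ω) = (s, t, u)), p ω) := by
    unfold ent
    refine Finset.sum_congr rfl fun u _ => ?_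
    congr 1
    rw [mass_split p (fun ω => (X ω, Y ω)) (fun ω => Z ω = u), Fintype.sum_prod_type]
    refine Finset.sum_congr rfl fun s _ => Finset.sum_congr rfl fun t _ => ?_
    congr 1
    ext ω
    simp only [Finset.mem_filter, Finset.mem_univ, true_and, Prod.mk.injEq]
    tauto
  have h1 : ent p (fun ω => (X ω, Y ω)) ≤ ent p (fun ω => ((X ω, Y ω), Z ω)) :=
    ent_pair_ge_left p hp0 (fun ω => (X ω, Y ω)) Z
  have h2 : ent p (fun ω => (X ω, Y ω, Z ω)) = ent p (fun ω => ((X ω, Y ω), Z ω)) :=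
    ent_equiv p (Equiv.prodAssoc S T U) (fun ω => ((X ω, Y ω), Z ω))
  have h3 : ent p (fun ω => (X ω, Y ω, Z ω)) + ent p Z ≤
      ent p (fun ω => (X ω, Z ω)) + ent p (fun ω => (Y ω, Z ω)) := by
    rw [ent_triple_eq, Exz, Eyz, Ez]
    exact core
  linarith

lemma condEnt_triangle (hp0 : ∀ ω, 0 ≤ p ω) (X : Ω → S) (Y : Ω → T) (Z : Ω → U) :
    condEnt p X Y ≤ condEnt p X Z + condEnt p Z Y := by
  unfold condEnt
  have h := ent_submod p hp0 X Y Z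
  have hswap : ent p (fun ω => (Z ω, Y ω)) = ent p (fun ω => (Y ω, Z ω)) :=
    ent_pair_comm p Y Z
  linarith

end entlem

/-! ### Algebraic lemmas for `DS` and `IBR` -/

lemma combo_mono {α x y : ℝ} (hα0 : 0 ≤ α) (hα : α ≤ 1 / 2) :
    α * x + (1 - α) * y ≤ α * min x y + (1 - α) * max x y := by
  rcases le_total x y with h | h
  · rw [min_eq_left h, max_eq_right h]
  · rw [min_eq_right h, max_eq_left h]
    nlinarith

lemma combo_tri {α u v u1 v1 u2 v2 : ℝ} (hα0 : 0 ≤ α) (hα : α ≤ 1 / 2)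
    (h1 : u ≤ u1 + u2) (h2 : v ≤ v1 + v2) :
    α * min u v + (1 - α) * max u v ≤
      (α * min u1 v1 + (1 - α) * max u1 v1) + (α * min u2 v2 + (1 - α) * max u2 v2) := by
  have hα1 : (0:ℝ) ≤ 1 - α := by linarith
  rcases le_total u v with h | h
  · rw [min_eq_left h, max_eq_right h]
    calc α * u + (1 - α) * v ≤ α * (u1 + u2) + (1 - α) * (v1 + v2) := by nlinarith
      _ = (α * u1 + (1 - α) * v1) + (α * u2 + (1 - α) * v2) := by ring
      _ ≤ _ := add_le_add (combo_mono hα0 hα) (combo_mono hα0 hα)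
  · rw [min_eq_right h, max_eq_left h]
    calc α * v + (1 - α) * u ≤ α * (v1 + v2) + (1 - α) * (u1 + u2) := by nlinarith
      _ = (α * v1 + (1 - α) * u1) + (α * v2 + (1 - α) * u2) := by ring
      _ ≤ _ := by
          refine add_le_add ?_ ?_
          · simpa [min_comm, max_comm] using (combo_mono (x := v1) (y := u1) hα0 hα)
          · simpa [min_comm, max_comm] using (combo_mono (x := v2) (y := u2) hα0 hα)

section main
variable {Ω : Type*} [Fintype Ω] {S T U : Type*} [Fintype S] [Fintype T] [Fintype U]
  [DecidableEq S] [DecidableEq T] [DecidableEq U] (p : Ω → ℝ)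

lemma DS_eq_condEnt (α : ℝ) (X : Ω → S) (Y : Ω → T) :
    DS α p X Y = α * min (condEnt p X Y) (condEnt p Y X)
      + (1 - α) * max (condEnt p X Y) (condEnt p Y X) := by
  have hswap : ent p (fun ω => (Y ω, X ω)) = ent p (fun ω => (X ω, Y ω)) :=
    ent_pair_comm p X Y
  unfold DS condEnt mutualInfo
  rw [hswap]
  rcases le_total (ent p X) (ent p Y) with h | h
  · rw [min_eq_left h, max_eq_right h, min_eq_left (by linarith), max_eq_right (by linarith)]
    ring
  · rw [min_eq_right h, max_eq_left h, min_eq_right (by linarith), max_eq_left (by linarith)]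
    ring

lemma DS_triangle (hp0 : ∀ ω, 0 ≤ p ω) (α : ℝ) (hα0 : 0 ≤ α) (hα : α ≤ 1 / 2)
    (X : Ω → S) (Y : Ω → T) (Z : Ω → U) :
    DS α p X Y ≤ DS α p X Z + DS α p Y Z := by
  rw [DS_eq_condEnt, DS_eq_condEnt, DS_eq_condEnt]
  have h1 : condEnt p X Y ≤ condEnt p X Z + condEnt p Z Y :=
    condEnt_triangle p hp0 X Y Z
  have h2 : condEnt p Y X ≤ condEnt p Y Z + condEnt p Z X :=
    condEnt_triangle p hp0 Y X Z
  have := combo_tri (u := condEnt p X Y) (v := condEnt p Y X)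
    (u1 := condEnt p X Z) (v1 := condEnt p Z X)
    (u2 := condEnt p Z Y) (v2 := condEnt p Y Z) hα0 hα h1 (by linarith)
  calc α * min (condEnt p X Y) (condEnt p Y X)
        + (1 - α) * max (condEnt p X Y) (condEnt p Y X)
      ≤ (α * min (condEnt p X Z) (condEnt p Z X)
          + (1 - α) * max (condEnt p X Z) (condEnt p Z X))
        + (α * min (condEnt p Z Y) (condEnt p Y Z)
          + (1 - α) * max (condEnt p Z Y) (condEnt p Y Z)) := this
    _ = _ := by rw [min_comm (condEnt p Z Y), max_comm (condEnt p Z Y)]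

lemma mutualInfo_le_left (hp0 : ∀ ω, 0 ≤ p ω) (X : Ω → S) (Y : Ω → T) :
    mutualInfo p X Y ≤ ent p X := by
  unfold mutualInfo
  linarith [ent_pair_ge_right p hp0 X Y]

lemma mutualInfo_le_right (hp0 : ∀ ω, 0 ≤ p ω) (X : Ω → S) (Y : Ω → T) :
    mutualInfo p X Y ≤ ent p Y := by
  unfold mutualInfo
  linarith [ent_pair_ge_left p hp0 X Y]

lemma IBR_ge_DS (hp0 : ∀ ω, 0 ≤ p ω) (hp1 : ∑ ω, p ω = 1)
    (α : ℝ) (hα0 : 0 ≤ α) (hα : α ≤ 1 / 2) (X : Ω → S) (Y : Ω → T) :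
    (α ^ 2 + (1 - α) ^ 2) * DS α p X Y ≤ IBR α p X Y := by
  have hα1 : (0:ℝ) ≤ 1 - α := by linarith
  set m := min (ent p X) (ent p Y) with hm
  set M := max (ent p X) (ent p Y) with hM
  have hm0 : 0 ≤ m := le_min (ent_nonneg p hp0 hp1 X) (ent_nonneg p hp0 hp1 Y)
  have hmM : m ≤ M := min_le_max
  have hI : mutualInfo p X Y ≤ m :=
    le_min (mutualInfo_le_left p hp0 X Y) (mutualInfo_le_right p hp0 X Y)
  have hsm : Real.sqrt m ^ 2 = m := Real.sq_sqrt hm0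
  have hsM : Real.sqrt M ^ 2 = M := Real.sq_sqrt (hm0.trans hmM)
  have hs : m ≤ Real.sqrt m * Real.sqrt M := by
    have h1 : Real.sqrt m * Real.sqrt m ≤ Real.sqrt m * Real.sqrt M :=
      mul_le_mul_of_nonneg_left (Real.sqrt_le_sqrt hmM) (Real.sqrt_nonneg m)
    nlinarith [Real.mul_self_sqrt hm0]
  unfold IBR DS
  rw [← hm, ← hM]
  nlinarith [mul_nonneg (mul_nonneg hα0 hα1) (sub_nonneg.2 hs),
    mul_nonneg (mul_nonneg (mul_nonneg hα0 hα1) (by linarith : (0:ℝ) ≤ 1 - 2 * α))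
      (sub_nonneg.2 hmM),
    mul_nonneg (mul_nonneg hα0 hα1) (sub_nonneg.2 hI), hsm, hsM]

lemma IBR_le_DS (hp0 : ∀ ω, 0 ≤ p ω) (hp1 : ∑ ω, p ω = 1)
    (α : ℝ) (hα0 : 0 ≤ α) (hα : α ≤ 1 / 2) (X : Ω → S) (Y : Ω → T) :
    IBR α p X Y ≤ DS α p X Y := by
  have hα1 : (0:ℝ) ≤ 1 - α := by linarith
  set m := min (ent p X) (ent p Y) with hm
  set M := max (ent p X) (ent p Y) with hM
  have hm0 : 0 ≤ m := le_min (ent_nonneg p hp0 hp1 X) (ent_nonneg p hp0 hp1 Y)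
  have hmM : m ≤ M := min_le_max
  have hsm : Real.sqrt m ^ 2 = m := Real.sq_sqrt hm0
  have hsM : Real.sqrt M ^ 2 = M := Real.sq_sqrt (hm0.trans hmM)
  unfold IBR DS
  rw [← hm, ← hM]
  nlinarith [mul_nonneg (mul_nonneg hα0 hα1) (sq_nonneg (Real.sqrt m - Real.sqrt M)),
    hsm, hsM]

end main

theorem IBR_relaxed_triangle {Ω S T U : Type*} [Fintype Ω] [Fintype S] [Fintype T]
    [Fintype U] [DecidableEq S] [DecidableEq T] [DecidableEq U]
    (p : Ω → ℝ) (hp0 : ∀ ω, 0 ≤ p ω) (hp1 : ∑ ω, p ω = 1)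
    (α : ℝ) (hα0 : 0 ≤ α) (hα : α ≤ 1 / 2)
    (X : Ω → S) (Y : Ω → T) (Z : Ω → U) :
    IBR α p X Y ≥ (α ^ 2 + (1 - α) ^ 2) * DS α p X Y ∧
      IBR α p X Y ≤ (α ^ 2 + (1 - α) ^ 2)⁻¹ * (IBR α p X Z + IBR α p Y Z) := by
  have hc : (0:ℝ) < α ^ 2 + (1 - α) ^ 2 := by nlinarith
  constructor
  · exact IBR_ge_DS p hp0 hp1 α hα0 hα X Y
  · have h1 : DS α p X Z ≤ (α ^ 2 + (1 - α) ^ 2)⁻¹ * IBR α p X Z := by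
      rw [inv_mul_eq_div, le_div_iff₀ hc]
      calc DS α p X Z * (α ^ 2 + (1 - α) ^ 2)
          = (α ^ 2 + (1 - α) ^ 2) * DS α p X Z := by ring
        _ ≤ IBR α p X Z := IBR_ge_DS p hp0 hp1 α hα0 hα X Z
    have h2 : DS α p Y Z ≤ (α ^ 2 + (1 - α) ^ 2)⁻¹ * IBR α p Y Z := by
      rw [inv_mul_eq_div, le_div_iff₀ hc]
      calc DS α p Y Z * (α ^ 2 + (1 - α) ^ 2)
          = (α ^ 2 + (1 - α) ^ 2) * DS α p Y Z := by ring
        _ ≤ IBR α p Y Z := IBR_ge_DS p hp0 hp1 α hα0 hα Y Z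
    calc IBR α p X Y ≤ DS α p X Y := IBR_le_DS p hp0 hp1 α hα0 hα X Y
      _ ≤ DS α p X Z + DS α p Y Z := DS_triangle p hp0 α hα0 hα X Y Z
      _ ≤ (α ^ 2 + (1 - α) ^ 2)⁻¹ * IBR α p X Z
          + (α ^ 2 + (1 - α) ^ 2)⁻¹ * IBR α p Y Z := add_le_add h1 h2
      _ = (α ^ 2 + (1 - α) ^ 2)⁻¹ * (IBR α p X Z + IBR α p Y Z) := by ring
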